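/- Let μ ∈ (0, 1/2) and define φ_1(z) = Σ_{k≥0} (−z²/4)^k / (((μ+1)/2)_k ((μ+2)/2)_k). Assume (as is known for this range) that φ_1 has only real zeros, with positive zeros ζ_{μ,1} < ζ_{μ,2} < ⋯ and Hadamard factorization φ_1(z) = ∏_{n≥1} (1 − z²/ζ_{μ,n}²). Then for every z ∈ ℂ with |z| < ζ_{μ,1}: 1 − (1/(μ − 1/2))·Re( Σ_{n≥1} 2z²/(ζ_{μ,n}² − z²) ) ≥ 1 + (1/(μ − 1/2))·Σ_{n≥1} 2|z|²/(ζ_{μ,n}² + |z|²), with equality when z = i|z|. -/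

import Mathlib

open scoped BigOperators

/-- The Pochhammer symbol `(a)_k = a (a+1) ⋯ (a+k-1)`. -/
noncomputable def poch (a : ℝ) (k : ℕ) : ℝ := ∏ i ∈ Finset.range k, (a + i)

/-- The even entire function `φ₁(z) = Σ_{k≥0} (−z²/4)^k / (((μ+1)/2)_k ((μ+2)/2)_k)`. -/
noncomputable def phi1 (μ : ℝ) (z : ℂ) : ℂ :=
  ∑' k : ℕ, (-z ^ 2 / 4) ^ k / ((poch ((μ + 1) / 2) k : ℂ) * (poch ((μ + 2) / 2) k : ℂ))

/-!
The Möbius map `w ↦ w / (a - w)` sends the circle `‖w‖ = r < a` onto a circle symmetric about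
the real axis whose leftmost point, `-r / (a + r)`, is the image of `w = -r`. With `w = z²` and
`a = ζₙ²` this bounds the real part of every summand from below by `-2‖z‖² / (ζₙ² + ‖z‖²)`, and
summing and multiplying by `1 / (μ - 1/2) < 0` gives the inequality. The two series are termwise
comparable in norm, so they converge or diverge together, and in the latter case both `tsum`s
are `0`. For `z = i x` the summands are exactly `-2x² / (ζₙ² + x²)`.
-/

section
variable {w : ℂ} {a : ℝ}

lemma Complex.neg_norm_div_add_norm_le_re_div_sub (h : ‖w‖ < a) :
    -(‖w‖ / (a + ‖w‖)) ≤ (w / (a - w)).re := by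
  have hr : 0 ≤ ‖w‖ := norm_nonneg w
  have hsq : w.re ^ 2 + w.im ^ 2 = ‖w‖ ^ 2 := by
    rw [Complex.sq_norm, Complex.normSq_apply]; ring
  have hre_ge : -‖w‖ ≤ w.re := by nlinarith [sq_nonneg w.im, sq_nonneg (w.re + ‖w‖)]
  have hre_le : w.re ≤ ‖w‖ := Complex.re_le_norm w
  have hN : 0 < (a - w.re) ^ 2 + w.im ^ 2 := by nlinarith [sq_nonneg w.im]
  have hdiv : (w / (a - w)).re =
      (w.re * (a - w.re) - w.im ^ 2) / ((a - w.re) ^ 2 + w.im ^ 2) := by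
    simp only [Complex.div_re, Complex.sub_re, Complex.ofReal_re, Complex.normSq_apply,
      Complex.sub_im, Complex.ofReal_im, zero_sub, mul_neg, neg_mul, neg_neg]
    ring
  rw [hdiv, neg_le, ← neg_div, div_le_div_iff₀ hN (by linarith)]
  -- the difference of the two sides is `a (a - ‖w‖) (re w + ‖w‖)`
  nlinarith [mul_nonneg (mul_nonneg (hr.trans h.le) (sub_nonneg.2 h.le))
    (neg_le_iff_add_nonneg.1 hre_ge)]

lemma Complex.sub_norm_le_norm_ofReal_sub : a - ‖w‖ ≤ ‖(a : ℂ) - w‖ :=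
  (sub_le_sub_right (le_abs_self a) _).trans (by simpa using norm_sub_norm_le (a : ℂ) w)

lemma Complex.norm_div_add_norm_le_norm_div_sub (h : ‖w‖ < a) :
    ‖w‖ / (a + ‖w‖) ≤ ‖w / (a - w)‖ := by
  have hle : ‖(a : ℂ) - w‖ ≤ a + ‖w‖ := by
    simpa [abs_of_pos ((norm_nonneg w).trans_lt h)] using norm_sub_le (a : ℂ) w
  rw [norm_div]
  exact div_le_div_of_nonneg_left (norm_nonneg w)
    ((sub_pos.2 h).trans_le sub_norm_le_norm_ofReal_sub) hle

lemma Complex.norm_div_sub_le (h : ‖w‖ < a) :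
    ‖w / (a - w)‖ ≤ ‖w‖ / (a - ‖w‖) := by
  rw [norm_div]
  exact div_le_div_of_nonneg_left (norm_nonneg w) (sub_pos.2 h) sub_norm_le_norm_ofReal_sub

end

lemma Complex.neg_tsum_le_re_tsum {ι : Type*} {f : ι → ℂ} {g : ι → ℝ} (C : ℝ)
    (hre : ∀ i, -g i ≤ (f i).re) (hlow : ∀ i, g i ≤ ‖f i‖) (hup : ∀ i, ‖f i‖ ≤ C * g i) :
    -∑' i, g i ≤ (∑' i, f i).re := by
  have hsum : Summable f ↔ Summable g :=
    ⟨fun hf ↦ hf.norm.of_norm_bounded fun i ↦ abs_le.2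
        ⟨by linarith [hre i, (f i).re_le_norm], hlow i⟩,
      fun hg ↦ (hg.mul_left C).of_norm_bounded hup⟩
  by_cases hg : Summable g
  · exact hasSum_le hre hg.hasSum.neg (Complex.hasSum_re (hsum.2 hg).hasSum)
  · simp [tsum_eq_zero_of_not_summable hg, tsum_eq_zero_of_not_summable (mt hsum.1 hg)]

lemma Complex.neg_tsum_le_re_tsum_div_sub {ι : Type*} {a : ι → ℝ} {a₀ : ℝ} {w : ℂ}
    (hw : ‖w‖ < a₀) (ha : ∀ i, a₀ ≤ a i) :
    -∑' i, ‖w‖ / (a i + ‖w‖) ≤ (∑' i, w / (a i - w)).re := by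
  have hw_lt (i : ι) : ‖w‖ < a i := hw.trans_le (ha i)
  have hr := norm_nonneg w
  -- `(a + r) / (a - r)` decreases in `a`, so `a₀` gives the worst constant
  have hratio (i : ι) :
      ‖w‖ / (a i - ‖w‖) ≤ (a₀ + ‖w‖) / (a₀ - ‖w‖) * (‖w‖ / (a i + ‖w‖)) := by
    rw [div_mul_div_comm, div_le_div_iff₀ (sub_pos.2 (hw_lt i)) (by nlinarith [hw_lt i])]
    nlinarith [mul_nonneg (mul_nonneg hr hr) (sub_nonneg.2 (ha i))]
  exact neg_tsum_le_re_tsum _ (fun i ↦ neg_norm_div_add_norm_le_re_div_sub (hw_lt i))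
    (fun i ↦ norm_div_add_norm_le_norm_div_sub (hw_lt i))
    (fun i ↦ (norm_div_sub_le (hw_lt i)).trans (hratio i))

theorem re_logderiv_bound_phi1_general (μ : ℝ) (hμ : μ ∈ Set.Ioo (0 : ℝ) ((1 : ℝ) / 2))
    (ζ : ℕ → ℝ) (hmono : StrictMono ζ) :
    (∀ z : ℂ, ‖z‖ < ζ 0 →
      1 - (1 / (μ - 1 / 2)) * (∑' n : ℕ, 2 * z ^ 2 / ((ζ n : ℂ) ^ 2 - z ^ 2)).re ≥
        1 + (1 / (μ - 1 / 2)) * ∑' n : ℕ, 2 * ‖z‖ ^ 2 / ((ζ n) ^ 2 + ‖z‖ ^ 2)) ∧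
    (∀ x : ℝ, 0 ≤ x → x < ζ 0 →
      1 - (1 / (μ - 1 / 2)) *
          (∑' n : ℕ, 2 * (Complex.I * x) ^ 2 / ((ζ n : ℂ) ^ 2 - (Complex.I * x) ^ 2)).re =
        1 + (1 / (μ - 1 / 2)) * ∑' n : ℕ, 2 * x ^ 2 / ((ζ n) ^ 2 + x ^ 2)) := by
  have hc : 1 / (μ - 1 / 2) < 0 := one_div_neg.2 (by linarith [hμ.2])
  refine ⟨fun z hz ↦ ?_, fun x _ _ ↦ ?_⟩
  · have hz2 : ‖z ^ 2‖ < ζ 0 ^ 2 := by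
      rw [norm_pow]; exact pow_lt_pow_left₀ hz (norm_nonneg z) two_ne_zero
    have hζ (n : ℕ) : ζ 0 ^ 2 ≤ ζ n ^ 2 :=
      pow_le_pow_left₀ ((norm_nonneg z).trans hz.le) (hmono.monotone n.zero_le) 2
    have hsum_re := Complex.neg_tsum_le_re_tsum_div_sub (a := fun n ↦ ζ n ^ 2) hz2 hζ
    simp only [norm_pow, Complex.ofReal_pow] at hsum_re
    simp only [mul_div_assoc, tsum_mul_left, Complex.mul_re, Complex.re_ofNat, Complex.im_ofNat,
      zero_mul, sub_zero]
    nlinarith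
  · have hterm (n : ℕ) : 2 * (Complex.I * x) ^ 2 / ((ζ n : ℂ) ^ 2 - (Complex.I * x) ^ 2) =
        ((-(2 * x ^ 2 / (ζ n ^ 2 + x ^ 2)) : ℝ) : ℂ) := by
      push_cast
      rw [mul_pow, Complex.I_sq]
      ring
    rw [tsum_congr hterm, ← Complex.ofReal_tsum, Complex.ofReal_re, tsum_neg]
    ring

/-- Let `μ ∈ (0,1/2)` and let `ζ 0 < ζ 1 < ⋯` be the positive zeros
of `φ₁`, with Hadamard factorization `φ₁(z) = ∏ (1 − z²/ζₙ²)`. Then for `|z| < ζ 0`,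
`1 − (1/(μ − 1/2)) Re (Σ 2z²/(ζₙ² − z²)) ≥ 1 + (1/(μ − 1/2)) Σ 2|z|²/(ζₙ² + |z|²)`,
with equality when `z = i |z|`. -/
theorem re_logderiv_bound_phi1 (μ : ℝ) (hμ : μ ∈ Set.Ioo (0 : ℝ) ((1 : ℝ) / 2))
    (ζ : ℕ → ℝ) (hpos : ∀ n, 0 < ζ n) (hmono : StrictMono ζ)
    (hzeros : ∀ x : ℝ, 0 < x → (phi1 μ x = 0 ↔ ∃ n, x = ζ n))
    (hfact : ∀ z : ℂ, phi1 μ z = ∏' n : ℕ, (1 - z ^ 2 / ((ζ n : ℂ)) ^ 2)) :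
    (∀ z : ℂ, ‖z‖ < ζ 0 →
      1 - (1 / (μ - 1 / 2)) * (∑' n : ℕ, 2 * z ^ 2 / ((ζ n : ℂ) ^ 2 - z ^ 2)).re ≥
        1 + (1 / (μ - 1 / 2)) * ∑' n : ℕ, 2 * ‖z‖ ^ 2 / ((ζ n) ^ 2 + ‖z‖ ^ 2)) ∧
    (∀ x : ℝ, 0 ≤ x → x < ζ 0 →
      1 - (1 / (μ - 1 / 2)) *
          (∑' n : ℕ, 2 * (Complex.I * x) ^ 2 / ((ζ n : ℂ) ^ 2 - (Complex.I * x) ^ 2)).re =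
        1 + (1 / (μ - 1 / 2)) * ∑' n : ℕ, 2 * x ^ 2 / ((ζ n) ^ 2 + x ^ 2)) :=
  re_logderiv_bound_phi1_general μ hμ ζ hmono
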